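/- Let h : (0,∞)² → [0,∞) be measurable, fix constants δ, s, N > 0, and let Γ be a real-valued map on liquidity allocations that is linear: Γ(a·L + b·L') = a·Γ(L) + b·Γ(L') for all allocations L, L' and a, b ≥ 0. For allocations L with L(p_X/p_Y) > 0 for almost every (p_X, p_Y) with h(p_X, p_Y) > 0 and with ∬ h·(1 + s/(p_Y·L(p_X/p_Y))) dp_X dp_Y < ∞, define the net expected profit F(L) = (δ/N)·∬_{(0,∞)²} h(p_X, p_Y)·(1 − s/(p_Y·L(p_X/p_Y))) dp_X dp_Y − Γ(L). Then F is concave: for any two allocations L₁, L₂ in its domain and any t ∈ [0, 1], F(t·L₁ + (1−t)·L₂) ≥ t·F(L₁) + (1−t)·F(L₂). -/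
import Mathlib


open MeasureTheory Set
open scoped ENNReal

noncomputable section

/-- The open positive orthant of `ℝ²`, on which prices live. -/
def orth : Set (ℝ × ℝ) := Set.Ioi 0 ×ˢ Set.Ioi 0

/-- A liquidity allocation: measurable and nonnegative on `(0, ∞)`. -/
def IsAlloc (L : ℝ → ℝ) : Prop :=
  Measurable L ∧ ∀ p ∈ Set.Ioi (0:ℝ), 0 ≤ L p

/-- The domain of the net-profit functional for the weighted belief `h = rate·ψ` and
mean trade size `s`: allocations `L` positive a.e. where `h > 0`, and with
`∬ h·(1 + s/(p_Y·L(p_X/p_Y))) < ∞`. -/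
def Dom (h : ℝ × ℝ → ℝ) (s : ℝ) (L : ℝ → ℝ) : Prop :=
  IsAlloc L ∧
  (∀ᵐ q ∂(volume.restrict orth), 0 < h q → 0 < L (q.1 / q.2)) ∧
  (∫⁻ q in orth,
      ENNReal.ofReal (h q * (1 + s / (q.2 * L (q.1 / q.2))))) < ⊤

/-- The net expected profit: expected fee revenue at fee rate `δ`, normalization `N`,
mean trade size `s`, minus the expected loss `Γ L`. -/
def netProfit (h : ℝ × ℝ → ℝ) (δ s N : ℝ) (Γ : (ℝ → ℝ) → ℝ) (L : ℝ → ℝ) : ℝ :=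
  (δ / N) * (∫ q in orth, h q * (1 - s / (q.2 * L (q.1 / q.2)))) - Γ L

/-!
STATEMENT 18: If `Γ` is a linear loss functional on liquidity allocations, then the net
expected profit `F(L) = (δ/N)·∬ h·(1 − s/(p_Y·L(p_X/p_Y))) − Γ(L)` is concave on its
domain: `F(t·L₁ + (1−t)·L₂) ≥ t·F(L₁) + (1−t)·F(L₂)`.
-/

lemma orth_meas : MeasurableSet orth := measurableSet_Ioi.prod measurableSet_Ioi

lemma combo_pos {a b t : ℝ} (ha : 0 < a) (hb : 0 < b) (ht : 0 ≤ t) (ht1 : t ≤ 1) :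
    0 < t*a + (1-t)*b := by
  rcases ht.lt_or_eq with h0 | h0
  · nlinarith [mul_pos h0 ha, mul_nonneg (by linarith : (0:ℝ) ≤ 1-t) hb.le]
  · subst h0; simpa using hb

lemma inv_combo {a b t : ℝ} (ha : 0 < a) (hb : 0 < b) (ht : 0 ≤ t) (ht1 : t ≤ 1) :
    1/(t*a+(1-t)*b) ≤ t*(1/a) + (1-t)*(1/b) := by
  have hc : 0 < t*a+(1-t)*b := combo_pos ha hb ht ht1
  have h1 : t*(1/a)+(1-t)*(1/b) = (t*b+(1-t)*a)/(a*b) := by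
    field_simp
  rw [h1, div_le_div_iff₀ hc (mul_pos ha hb)]
  nlinarith [mul_nonneg (mul_nonneg ht (by linarith : (0:ℝ) ≤ 1-t)) (sq_nonneg (a-b))]

lemma fplus_meas (h : ℝ × ℝ → ℝ) (hmeas : Measurable h) (s : ℝ) {L : ℝ → ℝ}
    (hL : Measurable L) :
    Measurable (fun q : ℝ × ℝ => h q * (1 + s / (q.2 * L (q.1 / q.2)))) :=
  hmeas.mul (measurable_const.add (measurable_const.div
    (measurable_snd.mul (hL.comp (measurable_fst.div measurable_snd)))))

lemma g_meas (h : ℝ × ℝ → ℝ) (hmeas : Measurable h) (s : ℝ) {L : ℝ → ℝ}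
    (hL : Measurable L) :
    Measurable (fun q : ℝ × ℝ => h q * (1 - s / (q.2 * L (q.1 / q.2)))) :=
  hmeas.mul (measurable_const.sub (measurable_const.div
    (measurable_snd.mul (hL.comp (measurable_fst.div measurable_snd)))))

lemma fplus_integrable (h : ℝ × ℝ → ℝ) (hmeas : Measurable h) (hnn : ∀ q, 0 ≤ h q)
    {s : ℝ} (hs : 0 < s) {L : ℝ → ℝ} (hD : Dom h s L) :
    Integrable (fun q : ℝ × ℝ => h q * (1 + s / (q.2 * L (q.1 / q.2))))
      (volume.restrict orth) := by
  obtain ⟨⟨hLm, hLnn⟩, _, hfin⟩ := hD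
  have fm := fplus_meas h hmeas s hLm
  have hae : 0 ≤ᵐ[volume.restrict orth]
      fun q : ℝ × ℝ => h q * (1 + s / (q.2 * L (q.1 / q.2))) := by
    filter_upwards [ae_restrict_mem orth_meas] with q hq
    have hy : (0:ℝ) < q.2 := hq.2
    have hL0 : 0 ≤ L (q.1 / q.2) := hLnn _ (div_pos hq.1 hy)
    have hx : 0 ≤ s / (q.2 * L (q.1 / q.2)) := div_nonneg hs.le (mul_nonneg hy.le hL0)
    exact mul_nonneg (hnn q) (by linarith)
  refine ⟨fm.aestronglyMeasurable, ?_⟩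
  rw [hasFiniteIntegral_iff_ofReal hae]
  exact hfin

lemma g_integrable (h : ℝ × ℝ → ℝ) (hmeas : Measurable h) (hnn : ∀ q, 0 ≤ h q)
    {s : ℝ} (hs : 0 < s) {L : ℝ → ℝ} (hD : Dom h s L) :
    Integrable (fun q : ℝ × ℝ => h q * (1 - s / (q.2 * L (q.1 / q.2))))
      (volume.restrict orth) := by
  have hLm := hD.1.1
  have hLnn := hD.1.2
  refine (fplus_integrable h hmeas hnn hs hD).mono
    (g_meas h hmeas s hLm).aestronglyMeasurable ?_
  filter_upwards [ae_restrict_mem orth_meas] with q hq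
  have hy : (0:ℝ) < q.2 := hq.2
  have hL0 : 0 ≤ L (q.1 / q.2) := hLnn _ (div_pos hq.1 hy)
  have hx : 0 ≤ s / (q.2 * L (q.1 / q.2)) := div_nonneg hs.le (mul_nonneg hy.le hL0)
  have h0 := hnn q
  rw [Real.norm_eq_abs, Real.norm_eq_abs, abs_mul, abs_mul, abs_of_nonneg h0]
  have : |1 - s / (q.2 * L (q.1 / q.2))| ≤ |1 + s / (q.2 * L (q.1 / q.2))| := by
    rw [abs_of_nonneg (show (0:ℝ) ≤ 1 + s / (q.2 * L (q.1 / q.2)) by linarith)]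
    rcases abs_cases (1 - s / (q.2 * L (q.1 / q.2))) with ⟨he, _⟩ | ⟨he, _⟩ <;> linarith
  exact mul_le_mul_of_nonneg_left this h0

theorem stmt_18 (h : ℝ × ℝ → ℝ) (hmeas : Measurable h) (hnn : ∀ q, 0 ≤ h q)
    (δ s N : ℝ) (hδ : 0 < δ) (hs : 0 < s) (hN : 0 < N)
    (Γ : (ℝ → ℝ) → ℝ)
    (hΓ : ∀ L L' : ℝ → ℝ, IsAlloc L → IsAlloc L' → ∀ a b : ℝ, 0 ≤ a → 0 ≤ b →
      Γ (fun p => a * L p + b * L' p) = a * Γ L + b * Γ L') :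
    ∀ L₁ L₂ : ℝ → ℝ, Dom h s L₁ → Dom h s L₂ → ∀ t ∈ Set.Icc (0:ℝ) 1,
      t * netProfit h δ s N Γ L₁ + (1 - t) * netProfit h δ s N Γ L₂
        ≤ netProfit h δ s N Γ (fun p => t * L₁ p + (1 - t) * L₂ p) := by
  intro L₁ L₂ hD₁ hD₂ t ht
  obtain ⟨ht0, ht1⟩ := ht
  have hL₁m := hD₁.1.1
  have hL₁nn := hD₁.1.2
  have hpos₁ := hD₁.2.1
  have hL₂m := hD₂.1.1
  have hL₂nn := hD₂.1.2
  have hpos₂ := hD₂.2.1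
  set Lₜ : ℝ → ℝ := fun p => t * L₁ p + (1 - t) * L₂ p with hLt
  have hLtm : Measurable Lₜ := (hL₁m.const_mul t).add (hL₂m.const_mul (1-t))
  -- integrands
  set g₁ : ℝ × ℝ → ℝ := fun q => h q * (1 - s / (q.2 * L₁ (q.1 / q.2))) with hg₁
  set g₂ : ℝ × ℝ → ℝ := fun q => h q * (1 - s / (q.2 * L₂ (q.1 / q.2))) with hg₂
  set gₜ : ℝ × ℝ → ℝ := fun q => h q * (1 - s / (q.2 * Lₜ (q.1 / q.2))) with hgₜ
  have if₁ := fplus_integrable h hmeas hnn hs hD₁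
  have if₂ := fplus_integrable h hmeas hnn hs hD₂
  have ig₁ : Integrable g₁ (volume.restrict orth) := g_integrable h hmeas hnn hs hD₁
  have ig₂ : Integrable g₂ (volume.restrict orth) := g_integrable h hmeas hnn hs hD₂
  have iF : Integrable (fun q => t * (h q * (1 + s / (q.2 * L₁ (q.1 / q.2))))
      + (1-t) * (h q * (1 + s / (q.2 * L₂ (q.1 / q.2))))) (volume.restrict orth) :=
    (if₁.const_mul t).add (if₂.const_mul (1-t))
  -- key pointwise facts, a.e.
  have hptwise : ∀ᵐ q ∂(volume.restrict orth),
      (t * g₁ q + (1-t) * g₂ q ≤ gₜ q) ∧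
      ‖gₜ q‖ ≤ ‖t * (h q * (1 + s / (q.2 * L₁ (q.1 / q.2))))
        + (1-t) * (h q * (1 + s / (q.2 * L₂ (q.1 / q.2))))‖ := by
    filter_upwards [ae_restrict_mem orth_meas, hpos₁, hpos₂] with q hq hp₁ hp₂
    have hy : (0:ℝ) < q.2 := hq.2
    have hxy : (0:ℝ) < q.1 / q.2 := div_pos hq.1 hy
    rcases eq_or_lt_of_le (hnn q) with hh0 | hh0
    · have hLt0 : 0 ≤ Lₜ (q.1 / q.2) :=
        add_nonneg (mul_nonneg ht0 (hL₁nn _ hxy))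
          (mul_nonneg (by linarith) (hL₂nn _ hxy))
      have hxt : 0 ≤ s / (q.2 * Lₜ (q.1 / q.2)) :=
        div_nonneg hs.le (mul_nonneg hy.le hLt0)
      have hx₁ : 0 ≤ s / (q.2 * L₁ (q.1 / q.2)) :=
        div_nonneg hs.le (mul_nonneg hy.le (hL₁nn _ hxy))
      have hx₂ : 0 ≤ s / (q.2 * L₂ (q.1 / q.2)) :=
        div_nonneg hs.le (mul_nonneg hy.le (hL₂nn _ hxy))
      constructor
      · simp only [hg₁, hg₂, hgₜ, ← hh0]; ring_nf; simp
      · simp only [hg₁, hg₂, hgₜ, ← hh0]; simp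
    · have ha : 0 < q.2 * L₁ (q.1 / q.2) := mul_pos hy (hp₁ hh0)
      have hb : 0 < q.2 * L₂ (q.1 / q.2) := mul_pos hy (hp₂ hh0)
      have hdenom : q.2 * Lₜ (q.1 / q.2)
          = t * (q.2 * L₁ (q.1 / q.2)) + (1-t) * (q.2 * L₂ (q.1 / q.2)) := by
        simp only [hLt]; ring
      have hkey : s / (q.2 * Lₜ (q.1 / q.2))
          ≤ t * (s / (q.2 * L₁ (q.1 / q.2))) + (1-t) * (s / (q.2 * L₂ (q.1 / q.2))) := by
        have := inv_combo ha hb ht0 ht1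
        have h2 := mul_le_mul_of_nonneg_left this hs.le
        rw [hdenom]
        calc s / (t * (q.2 * L₁ (q.1 / q.2)) + (1-t) * (q.2 * L₂ (q.1 / q.2)))
            = s * (1/(t * (q.2 * L₁ (q.1 / q.2)) + (1-t) * (q.2 * L₂ (q.1 / q.2)))) := by
              ring
          _ ≤ s * (t*(1/(q.2 * L₁ (q.1 / q.2))) + (1-t)*(1/(q.2 * L₂ (q.1 / q.2)))) := h2
          _ = t * (s / (q.2 * L₁ (q.1 / q.2))) + (1-t) * (s / (q.2 * L₂ (q.1 / q.2))) := by
              ring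
      have hxt : 0 ≤ s / (q.2 * Lₜ (q.1 / q.2)) := by
        have hct : 0 < q.2 * Lₜ (q.1 / q.2) := by
          rw [hdenom]; exact combo_pos ha hb ht0 ht1
        exact div_nonneg hs.le hct.le
      have hx₁ : 0 ≤ s / (q.2 * L₁ (q.1 / q.2)) := div_nonneg hs.le ha.le
      have hx₂ : 0 ≤ s / (q.2 * L₂ (q.1 / q.2)) := div_nonneg hs.le hb.le
      have hmul := mul_le_mul_of_nonneg_left hkey (hnn q)
      constructor
      · simp only [hg₁, hg₂, hgₜ]; nlinarith
      · rw [Real.norm_eq_abs, Real.norm_eq_abs]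
        simp only [hg₁, hg₂, hgₜ]
        have hF0 : 0 ≤ t * (h q * (1 + s / (q.2 * L₁ (q.1 / q.2))))
            + (1-t) * (h q * (1 + s / (q.2 * L₂ (q.1 / q.2)))) := by
          have := hnn q
          nlinarith
        rw [abs_of_nonneg hF0]
        rcases abs_cases (h q * (1 - s / (q.2 * Lₜ (q.1 / q.2)))) with ⟨he, _⟩ | ⟨he, _⟩ <;>
          nlinarith [hnn q, mul_nonneg (hnn q) hxt, mul_nonneg (hnn q) hx₁,
            mul_nonneg (hnn q) hx₂]
  have igₜ : Integrable gₜ (volume.restrict orth) := by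
    refine iF.mono (g_meas h hmeas s hLtm).aestronglyMeasurable ?_
    filter_upwards [hptwise] with q hq using hq.2
  have hle : ∀ᵐ q ∂(volume.restrict orth), t * g₁ q + (1-t) * g₂ q ≤ gₜ q := by
    filter_upwards [hptwise] with q hq using hq.1
  have hint : t * (∫ q in orth, g₁ q) + (1-t) * (∫ q in orth, g₂ q)
      ≤ ∫ q in orth, gₜ q := by
    have := integral_mono_ae ((ig₁.const_mul t).add (ig₂.const_mul (1-t))) igₜ hle
    simp only [Pi.add_apply] at this
    rw [integral_add (ig₁.const_mul t) (ig₂.const_mul (1-t))] at this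
    have e1 : ∫ a in orth, t * g₁ a = t * ∫ a in orth, g₁ a := by
      simpa [smul_eq_mul] using integral_smul (μ := volume.restrict orth) t g₁
    have e2 : ∫ a in orth, (1-t) * g₂ a = (1-t) * ∫ a in orth, g₂ a := by
      simpa [smul_eq_mul] using integral_smul (μ := volume.restrict orth) (1-t) g₂
    rwa [e1, e2] at this
  have hΓeq : Γ Lₜ = t * Γ L₁ + (1-t) * Γ L₂ :=
    hΓ L₁ L₂ ⟨hL₁m, hL₁nn⟩ ⟨hL₂m, hL₂nn⟩ t (1-t) ht0 (by linarith)
  have hδN : 0 ≤ δ / N := div_nonneg hδ.le hN.le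
  simp only [netProfit]
  have := mul_le_mul_of_nonneg_left hint hδN
  rw [hΓeq]
  nlinarith [this]
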